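/- In the Poisson-Gamma representation with t = exp(2 Zθ)/(2σ²), the marginal density of Y = √X equals the Rice density p(y) = (y/σ²) exp(-(y² + exp(2Zθ))/(2σ²)) I_0(y exp(Zθ)/σ²), and the conditional law of N given Y = y is the reinforced Poisson distribution with parameter τ = y·exp(Zθ)/(2σ²). -/

import Mathlib

open Real

/-- The modified Bessel function of the first kind of order zero, via its series. -/
noncomputable def besselI0 (z : ℝ) : ℝ := ∑' n : ℕ, (z / 2) ^ (2 * n) / ((n.factorial : ℝ)) ^ 2

/-- The joint density of `(N, Y)` in the Poisson-Gamma representation: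
`N ~ Poisson(t)`, `X | N=n ~ Gamma(n+1, 1/(2σ²))`, `Y = √X`. -/
noncomputable def jointDensity (t σ2 : ℝ) (n : ℕ) (y : ℝ) : ℝ :=
  2 * y * ((t * y ^ 2) ^ n / (((n.factorial : ℝ)) ^ 2 * (2 * σ2) ^ (n + 1))
    * Real.exp (-t - y ^ 2 / (2 * σ2)))

lemma summable_aux (τ : ℝ) :
    Summable (fun n : ℕ => τ ^ (2 * n) / ((n.factorial : ℝ)) ^ 2) := by
  have h1 : ∀ n : ℕ, (0:ℝ) ≤ τ ^ (2 * n) / ((n.factorial : ℝ)) ^ 2 := by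
    intro n; rw [pow_mul]; positivity
  have h2 : ∀ n : ℕ, τ ^ (2 * n) / ((n.factorial : ℝ)) ^ 2 ≤ (τ ^ 2) ^ n / (n.factorial : ℝ) := by
    intro n
    rw [pow_mul]
    have hfac : (1 : ℝ) ≤ (n.factorial : ℝ) := by exact_mod_cast n.factorial_pos
    have h2 : (n.factorial : ℝ) ≤ ((n.factorial : ℝ)) ^ 2 := by nlinarith
    exact div_le_div_of_nonneg_left (by positivity) (by positivity) h2
  exact Summable.of_nonneg_of_le h1 h2 (Real.summable_pow_div_factorial (τ ^ 2))

lemma besselI0_two_mul (τ : ℝ) :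
    besselI0 (2 * τ) = ∑' n : ℕ, τ ^ (2 * n) / ((n.factorial : ℝ)) ^ 2 := by
  unfold besselI0
  congr 1; funext n
  rw [mul_div_cancel_left₀ τ two_ne_zero]

lemma besselI0_pos (τ : ℝ) : 0 < besselI0 (2 * τ) := by
  rw [besselI0_two_mul]
  have hs := summable_aux τ
  refine Summable.tsum_pos hs (fun n => ?_) 0 (by norm_num)
  rw [pow_mul]; positivity

/-- In the Poisson-Gamma representation with `t = exp(2Zθ)/(2σ²)`, the marginal density of
`Y = √X` equals the Rice density
`p(y) = (y/σ²) exp(-(y² + exp(2Zθ))/(2σ²)) I₀(y exp(Zθ)/σ²)`,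
and the conditional law of `N` given `Y = y` is the reinforced Poisson distribution with
parameter `τ = y exp(Zθ)/(2σ²)`, i.e. `P(N=n | Y=y) = I₀(2τ)⁻¹ τ^{2n}/(n!)²`. -/
theorem rice_representation (zθ σ2 : ℝ) (hσ2 : 0 < σ2) (y : ℝ) (hy : 0 < y) :
    (∑' n : ℕ, jointDensity (Real.exp (2 * zθ) / (2 * σ2)) σ2 n y
        = y / σ2 * Real.exp (-(y ^ 2 + Real.exp (2 * zθ)) / (2 * σ2))
            * besselI0 (y * Real.exp zθ / σ2))
    ∧ (∀ n : ℕ,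
        jointDensity (Real.exp (2 * zθ) / (2 * σ2)) σ2 n y
            / (∑' m : ℕ, jointDensity (Real.exp (2 * zθ) / (2 * σ2)) σ2 m y)
          = (besselI0 (2 * (y * Real.exp zθ / (2 * σ2))))⁻¹
              * (y * Real.exp zθ / (2 * σ2)) ^ (2 * n) / ((n.factorial : ℝ)) ^ 2) := by
  set t : ℝ := Real.exp (2 * zθ) / (2 * σ2) with ht
  set τ : ℝ := y * Real.exp zθ / (2 * σ2) with hτ
  set C : ℝ := y / σ2 * Real.exp (-(y ^ 2 + Real.exp (2 * zθ)) / (2 * σ2)) with hC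
  have he : Real.exp (2 * zθ) = Real.exp zθ * Real.exp zθ := by
    rw [two_mul, Real.exp_add]
  have hty : t * y ^ 2 = τ ^ 2 * (2 * σ2) := by
    rw [ht, hτ, he]; field_simp
  have hexp : (-t - y ^ 2 / (2 * σ2)) = -(y ^ 2 + Real.exp (2 * zθ)) / (2 * σ2) := by
    rw [ht]; field_simp; ring
  have key : ∀ n : ℕ, jointDensity t σ2 n y
      = C * (τ ^ (2 * n) / ((n.factorial : ℝ)) ^ 2) := by
    intro n
    unfold jointDensity
    rw [hexp, hty, mul_pow, pow_succ, pow_mul, hC]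
    have hfac : (0:ℝ) < (n.factorial : ℝ) := by exact_mod_cast n.factorial_pos
    field_simp
    ring
  have hs := summable_aux τ
  have hsum : ∑' n : ℕ, jointDensity t σ2 n y = C * besselI0 (2 * τ) := by
    rw [besselI0_two_mul]
    simp only [key]
    exact tsum_mul_left
  have harg : y * Real.exp zθ / σ2 = 2 * τ := by
    rw [hτ]; field_simp
  have hCpos : 0 < C := by
    rw [hC]; positivity
  have hBpos := besselI0_pos τ
  constructor
  · rw [hsum, harg]
  · intro n
    rw [hsum, key n]
    rw [mul_div_mul_left _ _ (ne_of_gt hCpos)]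
    field_simp
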